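/- Let r, P_H, P_T ∈ ℂ^k with |r_i| = 1 for all i and P_H ∘ r = P_T. Let R_H, R_T ≥ 0 and define C_H = {x : ‖x - P_H‖ ≤ R_H} and C_T = {x : ‖x - P_T‖ ≤ R_T}. Suppose h₁ ∈ C_H, t ∈ C_T, and h₂ satisfies ‖h₂ - P_H‖ > R_H + 2R_T. Then for f(h, t) = -‖h ∘ r - t‖, we have f(h₁, t) > f(h₂, t). -/

import Mathlib

/-- Hadamard (coordinatewise) product on `ℂ^k`. -/
noncomputable def hadamard {k : ℕ} (a b : EuclideanSpace ℂ (Fin k)) :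
    EuclideanSpace ℂ (Fin k) := WithLp.toLp 2 (fun i => a i * b i)

/-! Coordinatewise multiplication by unit complex numbers is an isometry, so
`‖h ∘ r - P_T‖ = ‖h - P_H‖` for every `h`. The triangle inequality through `P_T` then bounds
`‖h₁ ∘ r - t‖` above by `R_H + R_T` and `‖h₂ ∘ r - t‖` below by `‖h₂ - P_H‖ - R_T > R_H + R_T`. -/

section Hadamard

variable {k : ℕ}

lemma sub_hadamard (a b r : EuclideanSpace ℂ (Fin k)) :
    hadamard (a - b) r = hadamard a r - hadamard b r := by
  ext i
  simp [hadamard, sub_mul]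

lemma norm_hadamard_of_norm_eq_one {r : EuclideanSpace ℂ (Fin k)} (hr : ∀ i, ‖r i‖ = 1)
    (a : EuclideanSpace ℂ (Fin k)) : ‖hadamard a r‖ = ‖a‖ := by
  simp [EuclideanSpace.norm_eq, hadamard, hr]

lemma norm_hadamard_sub_hadamard_of_norm_eq_one {r : EuclideanSpace ℂ (Fin k)}
    (hr : ∀ i, ‖r i‖ = 1) (a b : EuclideanSpace ℂ (Fin k)) :
    ‖hadamard a r - hadamard b r‖ = ‖a - b‖ := by
  rw [← sub_hadamard, norm_hadamard_of_norm_eq_one hr]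

end Hadamard

theorem head_in_area_scores_higher_general {k : ℕ}
    (r PH PT h₁ h₂ t : EuclideanSpace ℂ (Fin k))
    (hr : ∀ i, ‖r i‖ = 1) (hP : hadamard PH r = PT)
    (RH RT : ℝ)
    (hh₁ : ‖h₁ - PH‖ ≤ RH) (ht : ‖t - PT‖ ≤ RT)
    (hh₂ : ‖h₂ - PH‖ > RH + 2 * RT) :
    -‖hadamard h₁ r - t‖ > -‖hadamard h₂ r - t‖ := by
  have norm_sub_PT (x : EuclideanSpace ℂ (Fin k)) : ‖hadamard x r - PT‖ = ‖x - PH‖ :=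
    hP ▸ norm_hadamard_sub_hadamard_of_norm_eq_one hr x PH
  have close : ‖hadamard h₁ r - t‖ ≤ RH + RT :=
    calc ‖hadamard h₁ r - t‖ ≤ ‖hadamard h₁ r - PT‖ + ‖PT - t‖ :=
          norm_sub_le_norm_sub_add_norm_sub _ _ _
      _ = ‖h₁ - PH‖ + ‖t - PT‖ := by rw [norm_sub_PT, norm_sub_rev PT]
      _ ≤ RH + RT := add_le_add hh₁ ht
  have far : ‖hadamard h₂ r - PT‖ ≤ ‖hadamard h₂ r - t‖ + ‖t - PT‖ :=
    norm_sub_le_norm_sub_add_norm_sub _ _ _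
  rw [norm_sub_PT] at far
  linarith

theorem head_in_area_scores_higher {k : ℕ}
    (r PH PT h₁ h₂ t : EuclideanSpace ℂ (Fin k))
    (hr : ∀ i, ‖r i‖ = 1) (hP : hadamard PH r = PT)
    (RH RT : ℝ) (hRH : 0 ≤ RH) (hRT : 0 ≤ RT)
    (hh₁ : ‖h₁ - PH‖ ≤ RH) (ht : ‖t - PT‖ ≤ RT)
    (hh₂ : ‖h₂ - PH‖ > RH + 2 * RT) :
    -‖hadamard h₁ r - t‖ > -‖hadamard h₂ r - t‖ :=
  head_in_area_scores_higher_general r PH PT h₁ h₂ t hr hP RH RT hh₁ ht hh₂
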